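/- The separator encoding map is injective when restricted to sets of pairwise disjoint mentions: if M and M' are both sets of pairwise disjoint intervals over {1,…,n} and they have the same separator sequence, then M = M'. -/

import Mathlib

inductive Marker | S | E | C
deriving DecidableEq

/-- Separator sequence of a set of mentions (intervals). Gap `k` lies between word `k` and word `k+1`. -/
def sep (M : Set (ℕ × ℕ)) (k : ℕ) : Set Marker :=
  {m | (m = Marker.S ∧ ∃ p ∈ M, p.1 = k + 1) ∨
       (m = Marker.E ∧ ∃ p ∈ M, p.2 = k) ∨
       (m = Marker.C ∧ ∃ p ∈ M, p.1 ≤ k ∧ k + 1 ≤ p.2)}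

/-- `M` is a set of mentions over a sentence of `n` words. -/
def Valid (n : ℕ) (M : Set (ℕ × ℕ)) : Prop :=
  ∀ p ∈ M, 1 ≤ p.1 ∧ p.1 ≤ p.2 ∧ p.2 ≤ n


/-!
A mention `p` of a pairwise disjoint set `M` is recovered from the separator sequence as an
interval `[i, j]` with `S` before word `i`, `E` after word `j` and `C` at every gap in between.
Conversely, given such an interval, let `q` be the mention starting at `i` and `r` the one ending
at `j`. If `q ≠ r`, disjointness forces `q` to end before `j`; the gap after `q` then carries `C`,
so some mention straddles the end of `q` and overlaps it. Hence `q = r = p`, and `M` is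
determined by `sep M`.
-/

def IsDelimited (σ : ℕ → Set Marker) (p : ℕ × ℕ) : Prop :=
  1 ≤ p.1 ∧ p.1 ≤ p.2 ∧ Marker.S ∈ σ (p.1 - 1) ∧ Marker.E ∈ σ p.2 ∧
    ∀ k, p.1 ≤ k → k < p.2 → Marker.C ∈ σ k

section

variable {M : Set (ℕ × ℕ)} {k : ℕ}

theorem S_mem_sep_iff : Marker.S ∈ sep M k ↔ ∃ p ∈ M, p.1 = k + 1 := by
  simp [sep]

theorem E_mem_sep_iff : Marker.E ∈ sep M k ↔ ∃ p ∈ M, p.2 = k := by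
  simp [sep]

theorem C_mem_sep_iff : Marker.C ∈ sep M k ↔ ∃ p ∈ M, p.1 ≤ k ∧ k + 1 ≤ p.2 := by
  simp [sep]

theorem isDelimited_sep_of_mem {n : ℕ} (hM : Valid n M) {p : ℕ × ℕ} (hp : p ∈ M) :
    IsDelimited (sep M) p := by
  obtain ⟨hp1, hp12, -⟩ := hM p hp
  refine ⟨hp1, hp12, S_mem_sep_iff.2 ⟨p, hp, by omega⟩, E_mem_sep_iff.2 ⟨p, hp, rfl⟩,
    fun k hk1 hk2 => C_mem_sep_iff.2 ⟨p, hp, hk1, hk2⟩⟩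

theorem mem_of_isDelimited_sep {n : ℕ} (hM : Valid n M)
    (hdisj : ∀ p ∈ M, ∀ q ∈ M, p ≠ q → p.2 < q.1 ∨ q.2 < p.1)
    {p : ℕ × ℕ} (hp : IsDelimited (sep M) p) : p ∈ M := by
  obtain ⟨hp1, hp12, hS, hE, hC⟩ := hp
  obtain ⟨q, hq, hq1⟩ := S_mem_sep_iff.1 hS
  obtain ⟨r, hr, hr2⟩ := E_mem_sep_iff.1 hE
  obtain ⟨hq12, -⟩ := (hM q hq).2
  obtain ⟨hr12, -⟩ := (hM r hr).2
  have hqr : q = r := by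
    by_contra hne
    have hq_end : q.2 < p.2 := by rcases hdisj q hq r hr hne with h | h <;> omega
    obtain ⟨s, hs, hs1, hs2⟩ := C_mem_sep_iff.1 (hC q.2 (by omega) hq_end)
    have hsq : s ≠ q := by rintro rfl; omega
    rcases hdisj s hs q hq hsq with h | h <;> omega
  have hpq : p = q := Prod.ext (by omega) (by rw [hqr]; exact hr2.symm)
  exact hpq ▸ hq

theorem mem_iff_isDelimited_sep {n : ℕ} (hM : Valid n M)
    (hdisj : ∀ p ∈ M, ∀ q ∈ M, p ≠ q → p.2 < q.1 ∨ q.2 < p.1) (p : ℕ × ℕ) :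
    p ∈ M ↔ IsDelimited (sep M) p :=
  ⟨isDelimited_sep_of_mem hM, mem_of_isDelimited_sep hM hdisj⟩

end

theorem encoding_injective_on_disjoint (n : ℕ) (M M' : Set (ℕ × ℕ))
    (hM : Valid n M) (hM' : Valid n M')
    (hdisj : ∀ p ∈ M, ∀ q ∈ M, p ≠ q → p.2 < q.1 ∨ q.2 < p.1)
    (hdisj' : ∀ p ∈ M', ∀ q ∈ M', p ≠ q → p.2 < q.1 ∨ q.2 < p.1)
    (h : sep M = sep M') : M = M' := by
  ext p
  rw [mem_iff_isDelimited_sep hM hdisj, mem_iff_isDelimited_sep hM' hdisj', h]
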